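/- Fix integers k₁, k₂ ≥ 2 and set δ(ℓ) = |𝒞_ℓ|/|𝒜_ℓ|. Then δ(ℓ) is asymptotic to 1/ℓ as ℓ ranges over primes: for every ε > 0 there exists L such that for every prime ℓ > L, |ℓ·δ(ℓ) − 1| < ε. -/

import Mathlib

/-!
Over a finite field with `q` elements, `det : GL₂ → Fˣ` is a surjective homomorphism, so each of
its fibres has `|GL₂| / (q - 1) = q (q² - 1)` elements; hence `|𝒜| = |D| (q (q² - 1))²`, where
`D ⊆ Fˣ × Fˣ` is the set of admissible determinant pairs. Writing a matrix of trace `t` as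
`[[a, b], [c, t - a]]`, the matrices with determinant `d` and trace `t` number
`q (q - 1) + q · #{a | a (t - a) = d}`, which lies between `q (q - 1)` and `q (q + 1)`. Summing the
products of these fibre sizes over `D` and the `q` common traces gives
`q² / (q + 1)² ≤ q |𝒞| / |𝒜| ≤ q² / (q - 1)²`, so `|q δ(q) - 1| ≤ 4 / q` once `q ≥ 3`.
-/

open Finset Matrix

lemma card_filter_prod_mem {X Y β γ : Type*} [Fintype X] [Fintype Y] [DecidableEq β]
    [DecidableEq γ] (f : X → β) (g : Y → γ) (S : Finset (β × γ)) :
    #{p : X × Y | (f p.1, g p.2) ∈ S} = ∑ s ∈ S, #{x | f x = s.1} * #{y | g y = s.2} := by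
  rw [card_eq_sum_card_fiberwise (s := {p : X × Y | (f p.1, g p.2) ∈ S})
    (f := fun p : X × Y => (f p.1, g p.2)) (t := S) fun p hp => (mem_filter.1 hp).2]
  refine sum_congr rfl fun s hs => ?_
  rw [← card_product, ← filter_product, univ_product_univ, filter_filter]
  congr 1
  ext p
  simp only [mem_filter, mem_univ, true_and, Prod.ext_iff]
  constructor
  · exact fun h => h.2
  · rintro ⟨h₁, h₂⟩
    exact ⟨by rwa [h₁, h₂], h₁, h₂⟩

lemma card_GL_filter_eq {n R : Type*} [Fintype n] [DecidableEq n] [CommRing R] [Fintype R]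
    [DecidableEq R] (P : Matrix n n R → Prop) [DecidablePred P]
    (hP : ∀ M, P M → IsUnit M.det) :
    #{A : GL n R | P A} = #{M | P M} := by
  refine card_bij (fun A _ => (A : Matrix n n R)) (fun A hA => by simpa using hA)
    (fun A _ B _ h => Units.ext h) fun M hM => ?_
  simp only [mem_filter, mem_univ, true_and] at hM ⊢
  exact ⟨GeneralLinearGroup.mk'' M (hP M hM), by simpa using hM, rfl⟩

lemma abs_mul_div_sub_one_le (q n c : ℚ) (hq : 3 ≤ q) (hn : 0 < n)
    (hlo : n * q * (q * (q - 1)) ^ 2 ≤ c) (hhi : c ≤ n * q * (q * (q + 1)) ^ 2) :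
    |q * (c / (n * (q * (q ^ 2 - 1)) ^ 2)) - 1| ≤ 4 / q := by
  set a := n * (q * (q ^ 2 - 1)) ^ 2 with ha
  have hq0 : 0 < q := by linarith
  have hpos : 0 < a := by
    have : 0 < q ^ 2 - 1 := by nlinarith
    positivity
  rw [show q * (c / a) - 1 = (q * c - a) / a by field_simp, abs_div, abs_of_pos hpos,
    div_le_div_iff₀ hpos hq0]
  have hlow : 0 ≤ n * q ^ 2 * (q - 1) ^ 2 * (2 * q ^ 2 + 7 * q + 4) := by positivity
  have hupp : 0 ≤ n * q ^ 2 * (q + 1) ^ 2 * (2 * q ^ 2 - 7 * q + 4) :=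
    mul_nonneg (by positivity) (by nlinarith)
  have : |(q * c - a) * q| ≤ 4 * a := abs_le.2 ⟨by nlinarith, by nlinarith⟩
  rwa [abs_mul, abs_of_pos hq0] at this

section FiniteField

variable {F : Type*} [Field F] [Fintype F] [DecidableEq F]

local notation "q" => Fintype.card F

lemma card_filter_mul_eq (m : F) :
    #{p : F × F | p.1 * p.2 = m} = q - 1 + if m = 0 then q else 0 := by
  have hline (x : F) : #{y | x * y = m} = if x = 0 then (if m = 0 then q else 0) else 1 := by
    split_ifs with hx hm
    · simp [hx, hm]
    · simp [hx, Ne.symm hm]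
    · rw [card_eq_one]
      exact ⟨x⁻¹ * m, by ext y; simp [eq_inv_mul_iff_mul_eq₀ hx]⟩
  rw [card_filter, Fintype.sum_prod_type]
  simp only [← card_filter, hline]
  rw [Fintype.sum_eq_add_sum_compl 0, if_pos rfl,
    sum_congr rfl fun x hx => if_neg (by simpa using hx)]
  simp [card_compl, add_comm]

lemma card_filter_mul_sub_eq_le_two (t d : F) : #{a | a * (t - a) = d} ≤ 2 := by
  obtain h | ⟨a₀, ha₀⟩ := (filter (fun a : F => a * (t - a) = d) univ).eq_empty_or_nonempty
  · simp [h]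
  calc _ ≤ #{a₀, t - a₀} := card_le_card fun a ha => by
          simp only [mem_filter, mem_univ, true_and] at ha ha₀
          have : (a - a₀) * (a - (t - a₀)) = 0 := by linear_combination ha₀ - ha
          rcases mul_eq_zero.1 this with h | h
          · simp [sub_eq_zero.1 h]
          · simp [sub_eq_zero.1 h]
    _ ≤ 2 := card_le_two

lemma card_filter_det_trace_eq (d t : F) :
    #{M : Matrix (Fin 2) (Fin 2) F | M.det = d ∧ M.trace = t} =
      q * (q - 1) + #{a | a * (t - a) = d} * q := by
  have hparam : #{M : Matrix (Fin 2) (Fin 2) F | M.det = d ∧ M.trace = t} =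
      #{x : F × F × F | x.2.1 * x.2.2 = x.1 * (t - x.1) - d} := by
    refine card_nbij' (fun M => (M 0 0, M 0 1, M 1 0)) (fun x => !![x.1, x.2.1; x.2.2, t - x.1])
      ?_ ?_ ?_ ?_
    · intro M hM
      simp only [coe_filter, Set.mem_ofPred_eq, mem_univ, true_and, det_fin_two,
        trace_fin_two] at hM ⊢
      linear_combination M 0 0 * hM.2 - hM.1
    · intro x hx
      simp only [coe_filter, Set.mem_ofPred_eq, mem_univ, true_and, det_fin_two_of,
        trace_fin_two_of] at hx ⊢
      exact ⟨by linear_combination -hx, by ring⟩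
    · intro M hM
      simp only [coe_filter, Set.mem_ofPred_eq, mem_univ, true_and, trace_fin_two] at hM
      ext i j
      fin_cases i <;> fin_cases j <;> simp [← hM.2]
    · intro x _
      simp
  rw [hparam, card_filter, Fintype.sum_prod_type]
  simp only [← card_filter, card_filter_mul_eq, sub_eq_zero, sum_add_distrib, sum_const,
    card_univ, smul_eq_mul]
  rw [← sum_filter, sum_const, smul_eq_mul]

lemma card_GL_filter_det_trace_eq (u : Fˣ) (t : F) :
    #{A : GL (Fin 2) F |
        GeneralLinearGroup.det A = u ∧ (A : Matrix (Fin 2) (Fin 2) F).trace = t} =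
      q * (q - 1) + #{a | a * (t - a) = u} * q := by
  simp only [Units.ext_iff, GeneralLinearGroup.val_det_apply]
  rw [card_GL_filter_eq (fun M => M.det = (u : F) ∧ M.trace = t) fun M hM => hM.1 ▸ u.isUnit,
    card_filter_det_trace_eq]

lemma mul_sub_one_le_card_GL_filter_det_trace (u : Fˣ) (t : F) :
    q * (q - 1) ≤ #{A : GL (Fin 2) F |
      GeneralLinearGroup.det A = u ∧ (A : Matrix (Fin 2) (Fin 2) F).trace = t} := by
  rw [card_GL_filter_det_trace_eq]
  exact Nat.le_add_right _ _

lemma card_GL_filter_det_trace_le (u : Fˣ) (t : F) :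
    #{A : GL (Fin 2) F |
        GeneralLinearGroup.det A = u ∧ (A : Matrix (Fin 2) (Fin 2) F).trace = t} ≤
      q * (q + 1) := by
  have hq : 0 < q := Fintype.card_pos
  rw [card_GL_filter_det_trace_eq]
  calc _ ≤ q * (q - 1) + 2 * q := by gcongr; exact card_filter_mul_sub_eq_le_two t (u : F)
    _ = q * (q - 1 + 2) := by ring
    _ = q * (q + 1) := by congr 1; omega

lemma card_GL_filter_det_eq_mul {n : Type*} [Fintype n] [DecidableEq n] [Nonempty n] (u : Fˣ) :
    (q - 1) * #{A : GL n F | GeneralLinearGroup.det A = u} = Nat.card (GL n F) := by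
  have hfiber (v : Fˣ) : #{A : GL n F | GeneralLinearGroup.det A = v} =
      #{A : GL n F | GeneralLinearGroup.det A = u} :=
    MonoidHom.card_fiber_eq_of_mem_range _ (GeneralLinearGroup.det_surjective v)
      (GeneralLinearGroup.det_surjective u)
  calc (q - 1) * #{A : GL n F | GeneralLinearGroup.det A = u}
      = ∑ v : Fˣ, #{A : GL n F | GeneralLinearGroup.det A = v} := by
        simp [hfiber, Fintype.card_units]
    _ = Nat.card (GL n F) := by
        rw [← card_eq_sum_card_fiberwise fun _ _ => mem_univ _, card_univ,
          Nat.card_eq_fintype_card]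

lemma card_GL_fin_two_filter_det_eq (u : Fˣ) :
    #{A : GL (Fin 2) F | GeneralLinearGroup.det A = u} = q * (q ^ 2 - 1) := by
  have hq : 1 < q := Fintype.one_lt_card
  have h := card_GL_filter_det_eq_mul (n := Fin 2) u
  rw [card_GL_field, Fin.prod_univ_two] at h
  refine Nat.eq_of_mul_eq_mul_left (Nat.sub_pos_of_lt hq) (h.trans ?_)
  simp only [Fin.val_zero, Fin.val_one, pow_zero, pow_one]
  rw [sq, ← Nat.mul_sub_one q q]
  ring

section Pairs

variable (D : Finset (Fˣ × Fˣ))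

lemma card_GL_pairs_det_mem :
    #{p : GL (Fin 2) F × GL (Fin 2) F |
        (GeneralLinearGroup.det p.1, GeneralLinearGroup.det p.2) ∈ D} =
      #D * (q * (q ^ 2 - 1)) ^ 2 := by
  rw [card_filter_prod_mem GeneralLinearGroup.det GeneralLinearGroup.det D]
  simp [card_GL_fin_two_filter_det_eq, sq]

def detTraceDiag : Finset ((Fˣ × F) × (Fˣ × F)) :=
  (D ×ˢ univ).image fun x => ((x.1.1, x.2), (x.1.2, x.2))

variable {D} in
lemma mem_detTraceDiag {u v : Fˣ} {s t : F} :
    ((u, s), (v, t)) ∈ detTraceDiag D ↔ (u, v) ∈ D ∧ s = t := by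
  simp only [detTraceDiag, mem_image, mem_product, mem_univ, and_true, Prod.ext_iff]
  constructor
  · rintro ⟨⟨d, r⟩, hd, ⟨rfl, rfl⟩, rfl, rfl⟩
    exact ⟨hd, rfl⟩
  · rintro ⟨hD, rfl⟩
    exact ⟨((u, v), s), hD, ⟨rfl, rfl⟩, rfl, rfl⟩

lemma card_detTraceDiag : #(detTraceDiag D) = #D * q := by
  rw [detTraceDiag, card_image_of_injective, card_product, card_univ]
  intro x y h
  simp only [Prod.mk.injEq] at h
  exact Prod.ext (Prod.ext h.1.1 h.2.1) h.1.2

lemma card_GL_pairs_det_mem_trace_eq :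
    #{p : GL (Fin 2) F × GL (Fin 2) F |
        (GeneralLinearGroup.det p.1, GeneralLinearGroup.det p.2) ∈ D ∧
          (p.1 : Matrix (Fin 2) (Fin 2) F).trace = (p.2 : Matrix (Fin 2) (Fin 2) F).trace} =
      ∑ s ∈ detTraceDiag D,
        #{A : GL (Fin 2) F |
          GeneralLinearGroup.det A = s.1.1 ∧ (A : Matrix (Fin 2) (Fin 2) F).trace = s.1.2} *
        #{A : GL (Fin 2) F |
          GeneralLinearGroup.det A = s.2.1 ∧ (A : Matrix (Fin 2) (Fin 2) F).trace = s.2.2} := by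
  let f (A : GL (Fin 2) F) : Fˣ × F :=
    (GeneralLinearGroup.det A, (A : Matrix (Fin 2) (Fin 2) F).trace)
  convert card_filter_prod_mem f f (detTraceDiag D) using 3 with p
  · simp [f, mem_detTraceDiag]
  · simp [f, Prod.ext_iff]
  · simp [f, Prod.ext_iff]

theorem abs_mul_card_div_card_sub_one_le (hD : D.Nonempty) (hq : 3 ≤ q) :
    |(q : ℚ) *
        (#{p : GL (Fin 2) F × GL (Fin 2) F |
            (GeneralLinearGroup.det p.1, GeneralLinearGroup.det p.2) ∈ D ∧
              (p.1 : Matrix (Fin 2) (Fin 2) F).trace = (p.2 : Matrix (Fin 2) (Fin 2) F).trace} /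
          #{p : GL (Fin 2) F × GL (Fin 2) F |
            (GeneralLinearGroup.det p.1, GeneralLinearGroup.det p.2) ∈ D}) - 1| ≤ 4 / q := by
  set c := #{p : GL (Fin 2) F × GL (Fin 2) F |
    (GeneralLinearGroup.det p.1, GeneralLinearGroup.det p.2) ∈ D ∧
      (p.1 : Matrix (Fin 2) (Fin 2) F).trace = (p.2 : Matrix (Fin 2) (Fin 2) F).trace} with hc
  have hlo : #D * q * (q * (q - 1)) ^ 2 ≤ c := by
    rw [← card_detTraceDiag, ← smul_eq_mul, hc, card_GL_pairs_det_mem_trace_eq, sq]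
    exact card_nsmul_le_sum _ _ _ fun s _ => Nat.mul_le_mul
      (mul_sub_one_le_card_GL_filter_det_trace _ _) (mul_sub_one_le_card_GL_filter_det_trace _ _)
  have hhi : c ≤ #D * q * (q * (q + 1)) ^ 2 := by
    rw [← card_detTraceDiag, ← smul_eq_mul, hc, card_GL_pairs_det_mem_trace_eq, sq]
    exact sum_le_card_nsmul _ _ _ fun s _ => Nat.mul_le_mul
      (card_GL_filter_det_trace_le _ _) (card_GL_filter_det_trace_le _ _)
  have hq1 : 1 ≤ q := by omega
  have hq2 : 1 ≤ q ^ 2 := Nat.one_le_pow _ _ hq1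
  rw [card_GL_pairs_det_mem]
  push_cast [Nat.cast_sub hq1, Nat.cast_sub hq2] at hlo hhi ⊢
  exact abs_mul_div_sub_one_le q #D c (by exact_mod_cast hq) (by exact_mod_cast hD.card_pos)
    (by exact_mod_cast hlo) (by exact_mod_cast hhi)

end Pairs

end FiniteField

theorem stmt_16_general (k₁ k₂ : ℕ) :
    ∀ ε : ℚ, 0 < ε → ∃ L : ℕ, ∀ ℓ : ℕ, ℓ.Prime → L < ℓ →
      |(ℓ : ℚ) *
        ((Nat.card {p : Matrix.GeneralLinearGroup (Fin 2) (ZMod ℓ) ×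
              Matrix.GeneralLinearGroup (Fin 2) (ZMod ℓ) //
            (∃ v : (ZMod ℓ)ˣ,
              (p.1 : Matrix (Fin 2) (Fin 2) (ZMod ℓ)).det = (v : ZMod ℓ) ^ (k₁ - 1) ∧
              (p.2 : Matrix (Fin 2) (Fin 2) (ZMod ℓ)).det = (v : ZMod ℓ) ^ (k₂ - 1)) ∧
            Matrix.trace (p.1 : Matrix (Fin 2) (Fin 2) (ZMod ℓ)) =
              Matrix.trace (p.2 : Matrix (Fin 2) (Fin 2) (ZMod ℓ))} : ℚ) /
          (Nat.card {p : Matrix.GeneralLinearGroup (Fin 2) (ZMod ℓ) ×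
              Matrix.GeneralLinearGroup (Fin 2) (ZMod ℓ) //
            ∃ v : (ZMod ℓ)ˣ,
              (p.1 : Matrix (Fin 2) (Fin 2) (ZMod ℓ)).det = (v : ZMod ℓ) ^ (k₁ - 1) ∧
              (p.2 : Matrix (Fin 2) (Fin 2) (ZMod ℓ)).det = (v : ZMod ℓ) ^ (k₂ - 1)} : ℚ)) -
        1| < ε := by
  intro ε hε
  refine ⟨max 2 ⌈4 / ε⌉₊, fun ℓ hℓ hL => ?_⟩
  have : Fact ℓ.Prime := ⟨hℓ⟩
  classical
  let D : Finset ((ZMod ℓ)ˣ × (ZMod ℓ)ˣ) := univ.image fun v => (v ^ (k₁ - 1), v ^ (k₂ - 1))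
  have hD (A B : GL (Fin 2) (ZMod ℓ)) :
      (∃ v : (ZMod ℓ)ˣ, (A : Matrix (Fin 2) (Fin 2) (ZMod ℓ)).det = (v : ZMod ℓ) ^ (k₁ - 1) ∧
        (B : Matrix (Fin 2) (Fin 2) (ZMod ℓ)).det = (v : ZMod ℓ) ^ (k₂ - 1)) ↔
        (GeneralLinearGroup.det A, GeneralLinearGroup.det B) ∈ D := by
    simp [D, Units.ext_iff, eq_comm]
  have key := abs_mul_card_div_card_sub_one_le D ⟨_, mem_image_of_mem _ (mem_univ 1)⟩
    (by rw [ZMod.card]; omega)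
  simp only [Nat.card_eq_fintype_card, Fintype.card_subtype, hD]
  rw [ZMod.card] at key
  refine key.trans_lt ((div_lt_iff₀ (by exact_mod_cast hℓ.pos)).2 ?_)
  have := (Nat.le_ceil (4 / ε)).trans_lt (Nat.cast_lt.2 ((le_max_right _ _).trans_lt hL))
  rwa [div_lt_iff₀ hε, mul_comm] at this

/-- Fix k₁, k₂ ≥ 2 and set δ(ℓ) = |𝒞_ℓ|/|𝒜_ℓ| ∈ ℚ. Then δ(ℓ) ~ 1/ℓ as ℓ ranges
over primes: for every ε > 0 there is L such that for every prime ℓ > L,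
|ℓ·δ(ℓ) − 1| < ε. -/
theorem stmt_16 (k₁ k₂ : ℕ) (hk₁ : 2 ≤ k₁) (hk₂ : 2 ≤ k₂) :
    ∀ ε : ℚ, 0 < ε → ∃ L : ℕ, ∀ ℓ : ℕ, ℓ.Prime → L < ℓ →
      |(ℓ : ℚ) *
        ((Nat.card {p : Matrix.GeneralLinearGroup (Fin 2) (ZMod ℓ) ×
              Matrix.GeneralLinearGroup (Fin 2) (ZMod ℓ) //
            (∃ v : (ZMod ℓ)ˣ,
              (p.1 : Matrix (Fin 2) (Fin 2) (ZMod ℓ)).det = (v : ZMod ℓ) ^ (k₁ - 1) ∧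
              (p.2 : Matrix (Fin 2) (Fin 2) (ZMod ℓ)).det = (v : ZMod ℓ) ^ (k₂ - 1)) ∧
            Matrix.trace (p.1 : Matrix (Fin 2) (Fin 2) (ZMod ℓ)) =
              Matrix.trace (p.2 : Matrix (Fin 2) (Fin 2) (ZMod ℓ))} : ℚ) /
          (Nat.card {p : Matrix.GeneralLinearGroup (Fin 2) (ZMod ℓ) ×
              Matrix.GeneralLinearGroup (Fin 2) (ZMod ℓ) //
            ∃ v : (ZMod ℓ)ˣ,
              (p.1 : Matrix (Fin 2) (Fin 2) (ZMod ℓ)).det = (v : ZMod ℓ) ^ (k₁ - 1) ∧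
              (p.2 : Matrix (Fin 2) (Fin 2) (ZMod ℓ)).det = (v : ZMod ℓ) ^ (k₂ - 1)} : ℚ)) -
        1| < ε :=
  stmt_16_general k₁ k₂
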